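/- arXiv:0908.4389 — 4 statements merged into one kernel-verified Lean document; each statement's English description precedes it below -/
import Mathlib

section
/- Let C₁, C₂, η, δ > 0. Then for all K, M, N ≥ 1 with C₁N ≤ M ≤ C₂N, K ≥ N^η, q a positive integer with q ≤ N^{1−δ}, and gcd(q,ρ) = 1, one has ∑_{r ≤ K} ∑_{m ≡ ρr (mod q)} τ_{M,N}(m) ∼ KMN/q as N → ∞, uniformly in M, K, q and ρ; explicitly, for every ε' > 0 there exists N₀ (depending only on ε', C₁, C₂, η, δ) such that for all N ≥ N₀ and all such K, M, q, ρ, the ratio of the left side to KMN/q lies within ε' of 1. -/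
open Finset
open scoped Classical

/-- `tauMN M N m` = τ_{M,N}(m): the number of pairs (a,b) of positive integers
with a ≤ M, b ≤ N and a*b = m. -/
noncomputable def tauMN (M N : ℝ) (m : ℕ) : ℕ :=
  (m.divisors.filter (fun a : ℕ => (a : ℝ) ≤ M ∧ ((m / a : ℕ) : ℝ) ≤ N)).card

/-- `tauLe N n` = τ_N(n): the number of divisors d of n with d ≤ N. -/
noncomputable def tauLe (N : ℝ) (n : ℕ) : ℕ :=
  (n.divisors.filter (fun d : ℕ => (d : ℝ) ≤ N)).card

/-- ‖t‖_q = inf over integers n of |t - q·n|. -/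
noncomputable def qnorm (q : ℕ) (t : ℝ) : ℝ := ⨅ n : ℤ, |t - q * n|

/-- The pair correlation function R₂(x, N, α) for the fractional parts of n²α. -/
noncomputable def R2 (x : ℝ) (N : ℕ) (α : ℝ) : ℝ :=
  (((Finset.Icc 1 N) ×ˢ (Finset.Icc 1 N)).filter
    (fun p => p.1 ≠ p.2 ∧ qnorm 1 ((p.1 : ℝ) ^ 2 * α - (p.2 : ℝ) ^ 2 * α) ≤ x / N)).card / N

/-- The pair correlation of the fractional parts of n²α is Poissonian. -/
def PoissonianPC (α : ℝ) : Prop :=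
  ∀ x : ℝ, 0 < x → Filter.Tendsto (fun N : ℕ => R2 x N α) Filter.atTop (nhds (2 * x))

/-- α is of (Diophantine) type κ: |α − p/q| ≥ c/q^κ for some c > 0 and all p ∈ ℤ, q ∈ ℕ. -/
def IsOfType (α κ : ℝ) : Prop :=
  ∃ c : ℝ, 0 < c ∧ ∀ p : ℤ, ∀ q : ℕ, 0 < q → c / (q : ℝ) ^ κ ≤ |α - (p : ℝ) / (q : ℝ)|

/-- The rational p/q is of type (e, 𝒦): |p/q − u/v| ≥ 1/(𝒦 v^e) for all rationals u/v ≠ p/q. -/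
def RatOfType (p : ℤ) (q : ℕ) (e 𝒦 : ℝ) : Prop :=
  ∀ u : ℤ, ∀ v : ℕ, 0 < v → (u : ℝ) / (v : ℝ) ≠ (p : ℝ) / (q : ℝ) →
    1 / (𝒦 * (v : ℝ) ^ e) ≤ |(p : ℝ) / (q : ℝ) - (u : ℝ) / (v : ℝ)|

/-- The sum ∑_{r ≤ K} ∑_{m : m ≡ ρr (mod q)} τ_{M,N}(m) (over positive integers r ≤ K and
positive integers m; the inner sum is finite since τ_{M,N}(m) = 0 for m > MN). -/
noncomputable def divSumK (M N K : ℝ) (q ρ : ℕ) : ℕ :=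
  ∑ r ∈ Finset.Icc 1 ⌊K⌋₊,
    ∑ m ∈ (Finset.Icc 1 ⌊M * N⌋₊).filter
      (fun m : ℕ => (m : ZMod q) = (ρ : ZMod q) * (r : ZMod q)),
      tauMN M N m

/-!
Writing `m = ab` with `a ≤ M`, `b ≤ N`, the sum counts triples `(a, r, b)` with
`ab ≡ ρr (mod q)`. For fixed `a` and `r` the congruence in `b` is solvable only when
`g = gcd(a, q)` divides `ρr`, i.e. (as `ρ` is a unit mod `q`) when `g ∣ r`, and then `b` runs
over one residue class mod `q / g`, which has `Ng/q + O(1)` elements up to `N`. Summing over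
the `K/g + O(1)` admissible `r` gives `KN/q + O(K + Ng/q)`, and summing over `a ≤ M` with
`∑_{a ≤ M} gcd(a, q) ≤ τ(q) M` gives the relative error
`O(q/N + τ(q)/K + 1/N + 1/M + 1/K)`. Since `q ≤ N^{1-δ}` and `K ≥ N^η`, the divisor bound
`τ(q) ≪ q^η` makes every term `o(1)`.
-/

theorem Finset.abs_sum_sub_sum_le {ι : Type*} (s : Finset ι) {f g e : ι → ℝ}
    (h : ∀ i ∈ s, |f i - g i| ≤ e i) : |∑ i ∈ s, f i - ∑ i ∈ s, g i| ≤ ∑ i ∈ s, e i := by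
  rw [← sum_sub_distrib]
  exact (abs_sum_le_sum_abs _ _).trans (sum_le_sum h)

namespace Nat

theorem abs_card_filter_modEq_Icc_sub_div_le (n v : ℕ) {r : ℕ} (hr : 0 < r) :
    |(#{b ∈ Icc 1 n | b ≡ v [MOD r]} : ℝ) - n / r| ≤ 1 := by
  have hcard := Ioc_filter_modEq_card 0 n hr v
  rw [max_eq_left (sub_nonneg.2 (Int.floor_le_floor (by gcongr; simp)))] at hcard
  have hcardℚ : (#{b ∈ Icc 1 n | b ≡ v [MOD r]} : ℚ)
      = ⌊((n : ℚ) - v) / r⌋ - ⌊((0 : ℕ) - (v : ℚ)) / r⌋ := by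
    exact_mod_cast hcard
  have hsplit : ((n : ℚ) - v) / r - ((0 : ℕ) - (v : ℚ)) / r = n / r := by
    push_cast; ring
  have key : |(#{b ∈ Icc 1 n | b ≡ v [MOD r]} : ℚ) - n / r| ≤ 1 := by
    rw [hcardℚ, abs_le]
    constructor <;>
      linarith [Int.floor_le (((n : ℚ) - v) / r), Int.sub_one_lt_floor (((n : ℚ) - v) / r),
        Int.floor_le (((0 : ℕ) - (v : ℚ)) / r), Int.sub_one_lt_floor (((0 : ℕ) - (v : ℚ)) / r)]
  simpa using (Rat.cast_le (K := ℝ)).2 key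

theorem exists_mul_modEq_iff_modEq_div_gcd {a q c : ℕ} (hq : 0 < q) (hc : gcd a q ∣ c) :
    ∃ b₀, ∀ b, a * b ≡ c [MOD q] ↔ b ≡ b₀ [MOD q / gcd a q] := by
  have hg : 0 < gcd a q := gcd_pos_of_pos_right a hq
  have hcop := coprime_div_gcd_div_gcd hg
  obtain ⟨a', ha⟩ := gcd_dvd_left a q
  obtain ⟨q', hq'⟩ := gcd_dvd_right a q
  generalize gcd a q = g at *
  obtain ⟨c', rfl⟩ := hc
  subst ha hq'
  simp only [Nat.mul_div_cancel_left _ hg] at hcop ⊢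
  have hq'0 : q' ≠ 0 := by rintro rfl; simp at hq
  obtain ⟨b₀, -, hb₀⟩ := exists_mul_mod_eq_of_coprime c' hcop hq'0
  refine ⟨b₀, fun b => ?_⟩
  calc g * a' * b ≡ g * c' [MOD g * q'] ↔ g * (a' * b) ≡ g * c' [MOD g * q'] := by
        rw [mul_assoc]
    _ ↔ a' * b ≡ a' * b₀ [MOD q'] := by
        rw [ModEq.mul_left_cancel_iff' hg.ne']
        exact ⟨fun h => h.trans hb₀.symm, fun h => h.trans hb₀⟩
    _ ↔ b ≡ b₀ [MOD q'] :=
        ⟨ModEq.cancel_left_of_coprime (gcd_comm a' q' ▸ hcop), ModEq.mul_left a'⟩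

theorem card_filter_mul_modEq_eq_zero {a q c : ℕ} (s : Finset ℕ) (hc : ¬ gcd a q ∣ c) :
    #{b ∈ s | a * b ≡ c [MOD q]} = 0 := by
  refine Finset.card_eq_zero.2 (filter_eq_empty_iff.2 fun b _ h => hc ?_)
  exact (h.dvd_iff (gcd_dvd_right a q)).1 (dvd_mul_of_dvd_left (gcd_dvd_left a q) b)

theorem abs_card_filter_mul_modEq_sub_le {a q c : ℕ} (n : ℕ) (hq : 0 < q) (hc : gcd a q ∣ c) :
    |(#{b ∈ Icc 1 n | a * b ≡ c [MOD q]} : ℝ) - n * gcd a q / q| ≤ 1 := by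
  obtain ⟨b₀, hb₀⟩ := exists_mul_modEq_iff_modEq_div_gcd hq hc
  have hg : 0 < gcd a q := gcd_pos_of_pos_right a hq
  have hgq : ((q / gcd a q : ℕ) : ℝ) = q / gcd a q :=
    Nat.cast_div (gcd_dvd_right a q) (by positivity)
  simp_rw [hb₀]
  convert abs_card_filter_modEq_Icc_sub_div_le n b₀ (div_pos (le_of_dvd hq (gcd_dvd_right a q)) hg)
    using 3
  rw [hgq]
  field_simp

theorem abs_sum_card_filter_mul_modEq_sub_le {q ρ : ℕ} (hq : 0 < q) (hρ : Coprime q ρ)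
    (a n k : ℕ) :
    |∑ r ∈ Icc 1 k, (#{b ∈ Icc 1 n | a * b ≡ ρ * r [MOD q]} : ℝ) - k * n / q|
      ≤ k + n * gcd a q / q := by
  set d := gcd a q
  have hd : 0 < d := gcd_pos_of_pos_right a hq
  have hdvd : ∀ r, d ∣ ρ * r ↔ d ∣ r :=
    fun r => (Coprime.coprime_dvd_left (gcd_dvd_right a q) hρ).dvd_mul_left
  have hsupport : ∑ r ∈ Icc 1 k, (#{b ∈ Icc 1 n | a * b ≡ ρ * r [MOD q]} : ℝ)
      = ∑ r ∈ Icc 1 k with d ∣ r, (#{b ∈ Icc 1 n | a * b ≡ ρ * r [MOD q]} : ℝ) := by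
    refine (sum_filter_of_ne fun r _ hr => ?_).symm
    by_contra h
    exact hr (by simp [card_filter_mul_modEq_eq_zero _ (mt (hdvd r).1 h)])
  have hcard : #{r ∈ Icc 1 k | d ∣ r} = k / d := Ioc_filter_dvd_card_eq_div k d
  have hterms : |∑ r ∈ Icc 1 k with d ∣ r, (#{b ∈ Icc 1 n | a * b ≡ ρ * r [MOD q]} : ℝ)
      - (k / d : ℕ) * (n * d / q)| ≤ (k / d : ℕ) := by
    simpa [← hcard] using abs_sum_sub_sum_le _ fun r hr =>
      abs_card_filter_mul_modEq_sub_le n hq ((hdvd r).2 (mem_filter.1 hr).2)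
  have hround : |((k / d : ℕ) : ℝ) * (n * d / q) - k * n / q| ≤ n * d / q := by
    have hle : ((k / d : ℕ) : ℝ) * d ≤ k := by exact_mod_cast div_mul_le_self k d
    have hlt : (k : ℝ) < (k / d : ℕ) * d + d := by exact_mod_cast lt_div_mul_add hd
    have hnq : 0 ≤ (n : ℝ) / q := by positivity
    have hfac : ((k / d : ℕ) : ℝ) * (n * d / q) - k * n / q = ((k / d : ℕ) * d - k) * (n / q) := by
      ring
    rw [hfac, abs_mul, abs_of_nonneg hnq, mul_comm (n : ℝ), mul_div_assoc]
    exact mul_le_mul_of_nonneg_right (abs_le.2 ⟨by linarith, by linarith⟩) hnq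
  have hkd : ((k / d : ℕ) : ℝ) ≤ k := by exact_mod_cast div_le_self k d
  rw [hsupport]
  linarith [abs_sub_le (∑ r ∈ Icc 1 k with d ∣ r, (#{b ∈ Icc 1 n | a * b ≡ ρ * r [MOD q]} : ℝ))
    ((k / d : ℕ) * (n * d / q)) (k * n / q)]

theorem sum_gcd_le_card_divisors_mul {q : ℕ} (hq : q ≠ 0) (m : ℕ) :
    ∑ a ∈ Icc 1 m, gcd a q ≤ #q.divisors * m := by
  rw [← sum_fiberwise_of_maps_to (g := fun a => gcd a q) (t := q.divisors)
    fun a _ => mem_divisors.2 ⟨gcd_dvd_right a q, hq⟩]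
  calc ∑ d ∈ q.divisors, ∑ a ∈ Icc 1 m with gcd a q = d, gcd a q
      = ∑ d ∈ q.divisors, #{a ∈ Icc 1 m | gcd a q = d} * d :=
        sum_congr rfl fun d _ => by
          rw [sum_congr rfl fun a ha => (mem_filter.1 ha).2, sum_const, smul_eq_mul]
    _ ≤ ∑ d ∈ q.divisors, #{a ∈ Icc 1 m | d ∣ a} * d := by
        gcongr with d
        exact fun h => h ▸ gcd_dvd_left _ q
    _ ≤ ∑ _d ∈ q.divisors, m :=
        sum_le_sum fun d _ => (Ioc_filter_dvd_card_eq_div m d).symm ▸ div_mul_le_self m d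
    _ = #q.divisors * m := by rw [sum_const, smul_eq_mul]

theorem abs_sum_sum_card_filter_mul_modEq_sub_le {q ρ : ℕ} (hq : 0 < q) (hρ : Coprime q ρ)
    (m n k : ℕ) :
    |∑ a ∈ Icc 1 m, ∑ r ∈ Icc 1 k, (#{b ∈ Icc 1 n | a * b ≡ ρ * r [MOD q]} : ℝ) - m * k * n / q|
      ≤ m * k + n / q * (#q.divisors * m) := by
  have hgcd : (∑ a ∈ Icc 1 m, gcd a q : ℝ) ≤ #q.divisors * m := by
    exact_mod_cast sum_gcd_le_card_divisors_mul hq.ne' m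
  have h := abs_sum_sub_sum_le (Icc 1 m) (g := fun _ => (k * n / q : ℝ))
    fun a _ => abs_sum_card_filter_mul_modEq_sub_le hq hρ a n k
  simp only [sum_add_distrib, sum_const, card_Icc, add_tsub_cancel_right, nsmul_eq_mul,
    ← sum_div, ← mul_sum] at h
  calc _ = |∑ a ∈ Icc 1 m, ∑ r ∈ Icc 1 k, (#{b ∈ Icc 1 n | a * b ≡ ρ * r [MOD q]} : ℝ)
        - m * (k * n / q)| := by ring_nf
    _ ≤ m * k + n * (∑ a ∈ Icc 1 m, gcd a q : ℝ) / q := h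
    _ ≤ m * k + n / q * (#q.divisors * m) := by
        rw [mul_div_right_comm]
        gcongr

end Nat

theorem exists_add_one_le_mul_pow {x : ℝ} (hx : 1 < x) :
    ∃ C : ℝ, 1 ≤ C ∧ ∀ e : ℕ, (e + 1 : ℝ) ≤ C * x ^ e := by
  set C := max 1 (x - 1)⁻¹
  have hC : 1 ≤ C * (x - 1) :=
    (inv_mul_cancel₀ (by linarith : x - 1 ≠ 0)).symm.le.trans
      (mul_le_mul_of_nonneg_right (le_max_right _ _) (by linarith))
  refine ⟨C, le_max_left _ _, fun e => ?_⟩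
  have hbern : 1 + e * (x - 1) ≤ x ^ e := by
    simpa using one_add_mul_le_pow (a := x - 1) (by linarith) e
  calc (e + 1 : ℝ) ≤ C + e * (C * (x - 1)) := by
        nlinarith [le_max_left 1 (x - 1)⁻¹, (Nat.cast_nonneg e : (0 : ℝ) ≤ e)]
    _ = C * (1 + e * (x - 1)) := by ring
    _ ≤ C * x ^ e := by gcongr

theorem add_one_le_rpow_pow {ε p : ℝ} (hε : 0 < ε) (hp : 2 ^ ε⁻¹ ≤ p) (e : ℕ) :
    (e + 1 : ℝ) ≤ (p ^ ε) ^ e := by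
  have h2 : (2 : ℝ) ≤ p ^ ε := by
    calc (2 : ℝ) = (2 ^ ε⁻¹) ^ ε := (Real.rpow_inv_rpow zero_le_two hε.ne').symm
      _ ≤ p ^ ε := by gcongr
  calc (e + 1 : ℝ) ≤ 2 ^ e := by exact_mod_cast Nat.lt_two_pow_self
    _ ≤ (p ^ ε) ^ e := by gcongr

theorem Nat.card_divisors_le_mul_rpow {ε : ℝ} (hε : 0 < ε) :
    ∃ C : ℝ, ∀ n : ℕ, n ≠ 0 → (#n.divisors : ℝ) ≤ C * n ^ ε := by
  obtain ⟨C₀, hC₀, hsmall⟩ := exists_add_one_le_mul_pow (Real.one_lt_rpow one_lt_two hε)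
  set B := ⌈(2 : ℝ) ^ ε⁻¹⌉₊
  refine ⟨C₀ ^ (B + 1), fun n hn => ?_⟩
  set P := n.primeFactors
  have hpow : (n : ℝ) ^ ε = ∏ p ∈ P, ((p : ℝ) ^ ε) ^ n.factorization p := by
    conv_lhs => rw [← prod_factorization_pow_eq_self hn, prod_factorization_eq_prod_primeFactors]
    push_cast
    rw [← Real.finsetProd_rpow _ _ fun p _ => by positivity]
    exact prod_congr rfl fun p _ => (Real.rpow_pow_comm (by positivity) _ _).symm
  -- only the primes `p ≤ 2 ^ ε⁻¹` can have `e + 1 > (p ^ ε) ^ e`, and each costs at most `C₀`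
  have hfactor : ∀ p ∈ P, (n.factorization p + 1 : ℝ)
      ≤ (if p ≤ B then C₀ else 1) * ((p : ℝ) ^ ε) ^ n.factorization p := by
    intro p hp
    have hp2 : (2 : ℝ) ≤ p := by exact_mod_cast (prime_of_mem_primeFactors hp).two_le
    split_ifs with hpB
    · calc (n.factorization p + 1 : ℝ) ≤ C₀ * ((2 : ℝ) ^ ε) ^ n.factorization p := hsmall _
        _ ≤ C₀ * ((p : ℝ) ^ ε) ^ n.factorization p := by gcongr
    · rw [one_mul]
      refine add_one_le_rpow_pow hε ((le_ceil _).trans ?_) _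
      exact_mod_cast (not_le.1 hpB).le
  have hsmall_card : #{p ∈ P | p ≤ B} ≤ B + 1 :=
    (card_le_card fun p hp => mem_Iic.2 (mem_filter.1 hp).2).trans (card_Iic B).le
  calc (#n.divisors : ℝ) = ∏ p ∈ P, (n.factorization p + 1 : ℝ) := by
        rw [card_divisors hn]; push_cast; rfl
    _ ≤ ∏ p ∈ P, (if p ≤ B then C₀ else 1) * ((p : ℝ) ^ ε) ^ n.factorization p :=
        prod_le_prod (fun p _ => by positivity) hfactor
    _ = C₀ ^ #{p ∈ P | p ≤ B} * n ^ ε := by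
        rw [prod_mul_distrib, prod_ite, prod_const_one, mul_one, prod_const, hpow]
    _ ≤ C₀ ^ (B + 1) * n ^ ε := by gcongr

theorem tauMN_eq_card {M N : ℝ} {m : ℕ} (hM : 0 ≤ M) (hN : 0 ≤ N) (hm : m ≠ 0) :
    tauMN M N m = #{p ∈ Icc 1 ⌊M⌋₊ ×ˢ Icc 1 ⌊N⌋₊ | p.1 * p.2 = m} := by
  refine card_nbij' (fun a => (a, m / a)) Prod.fst ?_ ?_ ?_ ?_
  · intro a ha
    simp only [mem_coe, mem_filter, Nat.mem_divisors] at ha ⊢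
    obtain ⟨⟨hdvd, -⟩, haM, hbN⟩ := ha
    have ha0 : 0 < a := Nat.pos_of_dvd_of_pos hdvd (Nat.pos_of_ne_zero hm)
    refine ⟨mem_product.2 ⟨mem_Icc.2 ⟨ha0, Nat.le_floor haM⟩, mem_Icc.2 ⟨?_, Nat.le_floor hbN⟩⟩,
      Nat.mul_div_cancel' hdvd⟩
    exact Nat.div_pos (Nat.le_of_dvd (Nat.pos_of_ne_zero hm) hdvd) ha0
  · rintro ⟨a, b⟩ hp
    simp only [mem_coe, mem_filter, mem_product, mem_Icc] at hp ⊢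
    obtain ⟨⟨⟨ha1, haM⟩, -, hbN⟩, rfl⟩ := hp
    refine ⟨Nat.mem_divisors.2 ⟨dvd_mul_right a b, hm⟩, (Nat.le_floor_iff hM).1 haM, ?_⟩
    rw [Nat.mul_div_cancel_left b ha1]
    exact (Nat.le_floor_iff hN).1 hbN
  · exact fun a _ => rfl
  · rintro ⟨a, b⟩ hp
    simp only [mem_coe, mem_filter, mem_product, mem_Icc] at hp
    obtain ⟨⟨⟨ha1, -⟩, -⟩, rfl⟩ := hp
    simp [Nat.mul_div_cancel_left b ha1]

theorem sum_tauMN_filter_modEq {M N : ℝ} (hM : 0 ≤ M) (hN : 0 ≤ N) (q c : ℕ) :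
    ∑ m ∈ Icc 1 ⌊M * N⌋₊ with m ≡ c [MOD q], tauMN M N m
      = ∑ a ∈ Icc 1 ⌊M⌋₊, #{b ∈ Icc 1 ⌊N⌋₊ | a * b ≡ c [MOD q]} := by
  set box := Icc 1 ⌊M⌋₊ ×ˢ Icc 1 ⌊N⌋₊
  have hmaps : ∀ p ∈ {p ∈ box | p.1 * p.2 ≡ c [MOD q]},
      p.1 * p.2 ∈ {m ∈ Icc 1 ⌊M * N⌋₊ | m ≡ c [MOD q]} := by
    intro ⟨a, b⟩ hp
    simp only [box, mem_filter, mem_product, mem_Icc] at hp ⊢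
    obtain ⟨⟨⟨ha1, haM⟩, hb1, hbN⟩, hab⟩ := hp
    refine ⟨⟨Nat.one_le_iff_ne_zero.2 (by positivity), Nat.le_floor ?_⟩, hab⟩
    push_cast
    exact mul_le_mul ((Nat.le_floor_iff hM).1 haM) ((Nat.le_floor_iff hN).1 hbN) (by positivity) hM
  calc ∑ m ∈ Icc 1 ⌊M * N⌋₊ with m ≡ c [MOD q], tauMN M N m
      = ∑ m ∈ Icc 1 ⌊M * N⌋₊ with m ≡ c [MOD q],
          #{p ∈ {p ∈ box | p.1 * p.2 ≡ c [MOD q]} | p.1 * p.2 = m} := by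
        refine sum_congr rfl fun m hm => ?_
        obtain ⟨hm, hmc⟩ := mem_filter.1 hm
        rw [tauMN_eq_card hM hN (by simp at hm; omega), filter_filter]
        congr 1
        exact filter_congr fun p _ => ⟨fun h => ⟨h ▸ hmc, h⟩, And.right⟩
    _ = #{p ∈ box | p.1 * p.2 ≡ c [MOD q]} := (card_eq_sum_card_fiberwise hmaps).symm
    _ = ∑ a ∈ Icc 1 ⌊M⌋₊, #{b ∈ Icc 1 ⌊N⌋₊ | a * b ≡ c [MOD q]} := by
        simp only [box, card_filter, sum_product]

theorem divSumK_eq_sum_sum_card {M N : ℝ} (hM : 0 ≤ M) (hN : 0 ≤ N) (K : ℝ) (q ρ : ℕ) :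
    divSumK M N K q ρ
      = ∑ a ∈ Icc 1 ⌊M⌋₊, ∑ r ∈ Icc 1 ⌊K⌋₊, #{b ∈ Icc 1 ⌊N⌋₊ | a * b ≡ ρ * r [MOD q]} := by
  rw [divSumK, sum_comm]
  refine sum_congr rfl fun r _ => ?_
  simp only [← Nat.cast_mul, ZMod.natCast_eq_natCast_iff]
  exact sum_tauMN_filter_modEq hM hN q (ρ * r)

theorem mul_mul_sub_floor_mul_floor_mul_floor_le {x y z : ℝ} (hx : 0 ≤ x) (hy : 0 ≤ y)
    (hz : 0 ≤ z) : x * y * z - ⌊x⌋₊ * ⌊y⌋₊ * ⌊z⌋₊ ≤ x * y + y * z + z * x := by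
  have hx' := Nat.lt_floor_add_one x
  have hy' := Nat.lt_floor_add_one y
  have hz' := Nat.lt_floor_add_one z
  have hx₀ : (0 : ℝ) ≤ ⌊x⌋₊ := Nat.cast_nonneg _
  have hy₀ : (0 : ℝ) ≤ ⌊y⌋₊ := Nat.cast_nonneg _
  have hxy : (⌊x⌋₊ : ℝ) * ⌊y⌋₊ ≤ x * y := mul_le_mul (Nat.floor_le hx) (Nat.floor_le hy) hy₀ hx
  -- telescoping: xyz - x'y'z' = (x - x')yz + x'(y - y')z + x'y'(z - z')
  nlinarith [mul_le_mul_of_nonneg_right hx'.le (mul_nonneg hy hz),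
    mul_le_mul_of_nonneg_right hy'.le (mul_nonneg hx₀ hz), Nat.floor_le hx,
    mul_le_mul_of_nonneg_left hz'.le (mul_nonneg hx₀ hy₀)]

theorem abs_divSumK_sub_le {q ρ : ℕ} (hq : 0 < q) (hρ : Nat.Coprime q ρ) {M N K : ℝ}
    (hM : 0 ≤ M) (hN : 0 ≤ N) (hK : 0 ≤ K) :
    |(divSumK M N K q ρ : ℝ) - K * M * N / q|
      ≤ M * K + N / q * (#q.divisors * M) + (K * M + M * N + N * K) / q := by
  have hmain := Nat.abs_sum_sum_card_filter_mul_modEq_sub_le hq hρ ⌊M⌋₊ ⌊N⌋₊ ⌊K⌋₊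
  have hfloor := mul_mul_sub_floor_mul_floor_mul_floor_le hK hM hN
  have hfloor₀ : (⌊K⌋₊ : ℝ) * ⌊M⌋₊ * ⌊N⌋₊ ≤ K * M * N := by
    gcongr <;> exact Nat.floor_le ‹_›
  have hround : |(⌊M⌋₊ : ℝ) * ⌊K⌋₊ * ⌊N⌋₊ / q - K * M * N / q| ≤ (K * M + M * N + N * K) / q := by
    rw [← sub_div, abs_div, Nat.abs_cast, abs_sub_comm, abs_of_nonneg (by linarith)]
    gcongr
    linarith
  have hmono : (⌊M⌋₊ : ℝ) * ⌊K⌋₊ + ⌊N⌋₊ / q * (#q.divisors * ⌊M⌋₊)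
      ≤ M * K + N / q * (#q.divisors * M) := by
    gcongr <;> exact Nat.floor_le ‹_›
  rw [divSumK_eq_sum_sum_card hM hN]
  push_cast
  linarith [abs_sub_le (∑ a ∈ Icc 1 ⌊M⌋₊, ∑ r ∈ Icc 1 ⌊K⌋₊,
    (#{b ∈ Icc 1 ⌊N⌋₊ | a * b ≡ ρ * r [MOD q]} : ℝ)) (⌊M⌋₊ * ⌊K⌋₊ * ⌊N⌋₊ / q) (K * M * N / q)]

theorem abs_divSumK_mul_div_sub_one_le {q ρ : ℕ} (hq : 0 < q) (hρ : Nat.Coprime q ρ) {M N K : ℝ}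
    (hM : 0 < M) (hN : 0 < N) (hK : 0 < K) :
    |(divSumK M N K q ρ : ℝ) * q / (K * M * N) - 1|
      ≤ q / N + #q.divisors / K + (1 / N + 1 / K + 1 / M) := by
  have hscale : (divSumK M N K q ρ : ℝ) * q / (K * M * N) - 1
      = ((divSumK M N K q ρ : ℝ) - K * M * N / q) * (q / (K * M * N)) := by
    field_simp
  have herr : (M * K + N / q * (#q.divisors * M) + (K * M + M * N + N * K) / q) * (q / (K * M * N))
      = q / N + #q.divisors / K + (1 / N + 1 / K + 1 / M) := by
    field_simp
  rw [hscale, abs_mul, abs_of_pos (a := q / (K * M * N)) (by positivity), ← herr]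
  gcongr
  exact abs_divSumK_sub_le hq hρ hM.le hN.le hK.le

theorem abs_divSumK_mul_div_sub_one_le_rpow {C C₁ η δ N K M : ℝ} {q ρ : ℕ}
    (hC : ∀ n : ℕ, n ≠ 0 → (#n.divisors : ℝ) ≤ C * n ^ η) (hC₁ : 0 < C₁) (hη : 0 < η)
    (hN : 0 < N) (hM : C₁ * N ≤ M) (hK : N ^ η ≤ K) (hq : 0 < q) (hqN : (q : ℝ) ≤ N ^ (1 - δ))
    (hρ : Nat.Coprime q ρ) :
    |(divSumK M N K q ρ : ℝ) * q / (K * M * N) - 1|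
      ≤ N ^ (-δ) + C * N ^ (-(η * δ)) + (N⁻¹ + N ^ (-η) + C₁⁻¹ * N⁻¹) := by
  have hNη : 0 < N ^ η := by positivity
  have hC₀ : 0 ≤ C := by simpa using (hC 1 one_ne_zero).trans' (Nat.cast_nonneg _)
  have hM₀ : 0 < M := (mul_pos hC₁ hN).trans_le hM
  refine (abs_divSumK_mul_div_sub_one_le hq hρ hM₀ hN (hNη.trans_le hK)).trans ?_
  have hq_div : (q : ℝ) / N ≤ N ^ (-δ) := by
    rw [div_le_iff₀ hN, ← Real.rpow_add_one hN.ne', neg_add_eq_sub]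
    exact hqN
  have hτ_div : (#q.divisors : ℝ) / K ≤ C * N ^ (-(η * δ)) := by
    have hτ : (#q.divisors : ℝ) ≤ C * N ^ ((1 - δ) * η) := by
      calc (#q.divisors : ℝ) ≤ C * q ^ η := hC q hq.ne'
        _ ≤ C * (N ^ (1 - δ)) ^ η := by gcongr
        _ = C * N ^ ((1 - δ) * η) := by rw [Real.rpow_mul hN.le]
    calc (#q.divisors : ℝ) / K ≤ C * N ^ ((1 - δ) * η) / N ^ η := by gcongr
      _ = C * N ^ (-(η * δ)) := by
        rw [mul_div_assoc, ← Real.rpow_sub hN]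
        ring_nf
  have hK_inv : 1 / K ≤ N ^ (-η) := by
    rw [Real.rpow_neg hN.le, one_div]
    exact inv_anti₀ hNη hK
  have hM_inv : 1 / M ≤ C₁⁻¹ * N⁻¹ := by
    rw [one_div, ← mul_inv]
    exact inv_anti₀ (by positivity) hM
  rw [one_div N]
  gcongr

theorem div_sum_asymptotic_small_q_general (C₁ C₂ η δ : ℝ)
    (hC₁ : 0 < C₁) (hη : 0 < η) (hδ : 0 < δ) :
    ∀ ε' : ℝ, 0 < ε' → ∃ N₀ : ℝ, ∀ N K M : ℝ, ∀ q ρ : ℕ,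
      N₀ ≤ N → 1 ≤ K → 1 ≤ M → 1 ≤ N → C₁ * N ≤ M → M ≤ C₂ * N → N ^ η ≤ K →
      0 < q → (q : ℝ) ≤ N ^ (1 - δ) → Nat.gcd q ρ = 1 →
      |(divSumK M N K q ρ : ℝ) * q / (K * M * N) - 1| ≤ ε' := by
  intro ε' hε'
  obtain ⟨C, hC⟩ := Nat.card_divisors_le_mul_rpow hη
  have hlim : Filter.Tendsto
      (fun N : ℝ => N ^ (-δ) + C * N ^ (-(η * δ)) + (N⁻¹ + N ^ (-η) + C₁⁻¹ * N⁻¹))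
      Filter.atTop (nhds 0) := by
    have hpow {κ : ℝ} (hκ : 0 < κ) := tendsto_rpow_neg_atTop hκ
    have hinv := tendsto_inv_atTop_zero (𝕜 := ℝ)
    simpa using ((hpow hδ).add ((hpow (mul_pos hη hδ)).const_mul C)).add
      ((hinv.add (hpow hη)).add (hinv.const_mul C₁⁻¹))
  obtain ⟨N₀, hN₀⟩ := Filter.eventually_atTop.1 (hlim.eventually (gt_mem_nhds hε'))
  refine ⟨N₀, fun N K M q ρ hN₀N _ _ hN hMN _ hKN hq hqN hqρ => ?_⟩
  exact (abs_divSumK_mul_div_sub_one_le_rpow hC hC₁ hη (by linarith) hMN hKN hq hqN hqρ).trans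
    (hN₀ N hN₀N).le

/-- Let C₁, C₂, η, δ > 0.  For all K, M, N ≥ 1 with C₁N ≤ M ≤ C₂N, K ≥ N^η,
q ≤ N^{1−δ} and gcd(q,ρ) = 1, one has ∑_{r ≤ K} ∑_{m ≡ ρr (q)} τ_{M,N}(m) ∼ KMN/q
as N → ∞, uniformly in M, K, q, ρ: for every ε' > 0 there is N₀ (depending only on
ε', C₁, C₂, η, δ) such that for all N ≥ N₀ and all such K, M, q, ρ the ratio of the sum
to KMN/q lies within ε' of 1. -/
theorem div_sum_asymptotic_small_q (C₁ C₂ η δ : ℝ)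
    (hC₁ : 0 < C₁) (hC₂ : 0 < C₂) (hη : 0 < η) (hδ : 0 < δ) :
    ∀ ε' : ℝ, 0 < ε' → ∃ N₀ : ℝ, ∀ N K M : ℝ, ∀ q ρ : ℕ,
      N₀ ≤ N → 1 ≤ K → 1 ≤ M → 1 ≤ N → C₁ * N ≤ M → M ≤ C₂ * N → N ^ η ≤ K →
      0 < q → (q : ℝ) ≤ N ^ (1 - δ) → Nat.gcd q ρ = 1 →
      |(divSumK M N K q ρ : ℝ) * q / (K * M * N) - 1| ≤ ε' :=
  div_sum_asymptotic_small_q_general C₁ C₂ η δ hC₁ hη hδ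
end

section
/- For every ε > 0 there exists a constant C (depending only on ε) such that for all real N, K ≥ 1 and all positive integers q, | ∑_{r ≤ K} ∑_{d ≤ N, gcd(d,q) ∣ r} gcd(d,q)/d − K log N | ≤ C·( K q^ε + q^ε log N ), where the sums run over positive integers r ≤ K and positive integers d ≤ N with gcd(d,q) dividing r. -/
open Finset
open scoped Classical

/-!
Counting the `r ≤ K` divisible by `g = (d, q)` turns the double sum into
`∑_{d ≤ N} (g / d) ⌊⌊K⌋ / g⌋ = ⌊K⌋ H_⌊N⌋ - ∑_{d ≤ N} (⌊K⌋ mod g) / d`.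
The subtracted sum is at most `∑_{d ≤ N} (d, q) / d ≤ τ(q) H_⌊N⌋`, since `d ↦ d / g` is
injective on each fibre of `d ↦ (d, q)`, and the divisor bound `τ(q) ≪_ε q^ε` together with
`H_⌊N⌋ = log N + O(1)` gives the claim.
-/

open Real

section Bernoulli

variable {K : Type*} [Field K] [LinearOrder K] [IsStrictOrderedRing K]

theorem add_one_le_pow_of_two_le {y : K} (hy : 2 ≤ y) (a : ℕ) : (a + 1 : K) ≤ y ^ a := by
  have hbern : 1 + a * (y - 1) ≤ y ^ a := by
    simpa using one_add_mul_le_pow (a := y - 1) (by linarith) a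
  nlinarith [(Nat.cast_nonneg a : (0 : K) ≤ a)]

theorem add_one_le_div_sub_one_mul_pow {b y : K} (hb : 1 < b) (hby : b ≤ y) (a : ℕ) :
    (a + 1 : K) ≤ b / (b - 1) * y ^ a := by
  have hbern : 1 + a * (b - 1) ≤ b ^ a := by
    simpa using one_add_mul_le_pow (a := b - 1) (by linarith) a
  have hb1 : 0 < b - 1 := by linarith
  calc (a + 1 : K) ≤ b / (b - 1) * (1 + a * (b - 1)) := by
        rw [div_mul_eq_mul_div, le_div_iff₀ hb1]
        nlinarith [mul_nonneg (Nat.cast_nonneg a : (0 : K) ≤ a) (sq_nonneg (b - 1))]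
    _ ≤ b / (b - 1) * y ^ a := by
        gcongr
        exact hbern.trans (pow_le_pow_left₀ (by linarith) hby a)

end Bernoulli

theorem Finset.prod_le_pow_card_mul_prod {ι R : Type*} [CommSemiring R] [PartialOrder R]
    [IsOrderedRing R] {s t : Finset ι} {f g : ι → R} {c : R} (hc : 1 ≤ c)
    (hf : ∀ i ∈ s, 0 ≤ f i) (hg : ∀ i ∈ s, 0 ≤ g i) (hfg : ∀ i ∈ s, f i ≤ c * g i)
    (hfg_of_notMem : ∀ i ∈ s, i ∉ t → f i ≤ g i) :
    ∏ i ∈ s, f i ≤ c ^ #t * ∏ i ∈ s, g i := by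
  classical
  calc ∏ i ∈ s, f i ≤ ∏ i ∈ s, (if i ∈ t then c else 1) * g i := by
        refine prod_le_prod hf fun i hi => ?_
        split_ifs with hit
        · exact hfg i hi
        · simpa using hfg_of_notMem i hi hit
    _ = c ^ #(s ∩ t) * ∏ i ∈ s, g i := by
        rw [prod_mul_distrib, prod_ite_mem, prod_const]
    _ ≤ c ^ #t * ∏ i ∈ s, g i := by
        gcongr
        · exact prod_nonneg hg
        · exact inter_subset_right

theorem Nat.rpow_eq_prod_primeFactors {n : ℕ} (hn : n ≠ 0) (ε : ℝ) :
    (n : ℝ) ^ ε = ∏ p ∈ n.primeFactors, ((p : ℝ) ^ ε) ^ n.factorization p := by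
  conv_lhs => rw [Nat.prod_primeFactors_pow_factorization hn]
  push_cast
  rw [← finsetProd_rpow _ _ fun p _ => by positivity]
  exact prod_congr rfl fun p _ => (rpow_pow_comm p.cast_nonneg ε _).symm

theorem Nat.exists_card_divisors_le_rpow {ε : ℝ} (hε : 0 < ε) :
    ∃ C, ∀ n : ℕ, n ≠ 0 → (#n.divisors : ℝ) ≤ C * n ^ ε := by
  obtain ⟨B, hB⟩ := (((tendsto_rpow_atTop hε).comp tendsto_natCast_atTop_atTop)
    |>.eventually_ge_atTop (2 : ℝ)).exists_forall_of_atTop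
  have hb : 1 < (2 : ℝ) ^ ε := one_lt_rpow one_lt_two hε
  -- `a + 1 ≤ (p ^ ε) ^ a` once `p ^ ε ≥ 2`, i.e. for `p ≥ B`; each prime `p < B` costs at most
  -- the factor `2 ^ ε / (2 ^ ε - 1)`.
  refine ⟨(2 ^ ε / (2 ^ ε - 1)) ^ #(range B), fun n hn => ?_⟩
  rw [Nat.card_divisors hn, Nat.rpow_eq_prod_primeFactors hn]
  push_cast
  refine prod_le_pow_card_mul_prod ?_ (fun p _ => by positivity) (fun p _ => by positivity)
    (fun p hp => ?_) (fun p _ hpB => ?_)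
  · rw [le_div_iff₀ (by linarith)]
    linarith
  · refine add_one_le_div_sub_one_mul_pow hb (rpow_le_rpow zero_le_two ?_ hε.le) _
    exact_mod_cast (Nat.prime_of_mem_primeFactors hp).two_le
  · exact add_one_le_pow_of_two_le (hB p (by simpa using hpB)) _

theorem abs_harmonic_floor_sub_log_le {N : ℝ} (hN : 1 ≤ N) :
    |(harmonic ⌊N⌋₊ : ℝ) - log N| ≤ 1 := by
  have hN0 : 0 < N := by linarith
  have hn : (0 : ℝ) < ⌊N⌋₊ := by exact_mod_cast Nat.floor_pos.mpr hN
  have hlower : log N ≤ harmonic ⌊N⌋₊ := by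
    refine (log_le_log hN0 ?_).trans (log_add_one_le_harmonic _)
    exact_mod_cast (Nat.lt_floor_add_one N).le
  have hupper : (harmonic ⌊N⌋₊ : ℝ) ≤ 1 + log N :=
    (harmonic_le_one_add_log _).trans (by gcongr; exact Nat.floor_le hN0.le)
  rw [abs_le]
  constructor <;> linarith

theorem abs_floor_mul_harmonic_floor_sub_le {N K : ℝ} (hN : 1 ≤ N) (hK : 1 ≤ K) :
    |⌊K⌋₊ * (harmonic ⌊N⌋₊ : ℝ) - K * log N| ≤ K + log N := by
  have hL : 0 ≤ log N := log_nonneg hN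
  have hM : |(⌊K⌋₊ : ℝ) - K| ≤ 1 := by
    rw [abs_sub_comm, abs_of_nonneg (sub_nonneg.mpr (Nat.floor_le (by linarith)))]
    linarith [Nat.lt_floor_add_one K]
  calc |⌊K⌋₊ * (harmonic ⌊N⌋₊ : ℝ) - K * log N|
      = |⌊K⌋₊ * ((harmonic ⌊N⌋₊ : ℝ) - log N) + (⌊K⌋₊ - K) * log N| := by ring_nf
    _ ≤ ⌊K⌋₊ * 1 + 1 * log N := by
        refine (abs_add_le _ _).trans (add_le_add ?_ ?_) <;> rw [abs_mul]
        · rw [Nat.abs_cast]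
          gcongr
          exact abs_harmonic_floor_sub_log_le hN
        · rw [abs_of_nonneg hL]
          gcongr
    _ ≤ K + log N := by linarith [Nat.floor_le (by linarith : 0 ≤ K)]

theorem sum_Icc_sum_filter_dvd_eq_sum_mul_div {ι R : Type*} [CommSemiring R] (s : Finset ι)
    (f : ι → ℕ) (w : ι → R) (M : ℕ) :
    ∑ r ∈ Icc 1 M, ∑ i ∈ s with f i ∣ r, w i = ∑ i ∈ s, w i * (M / f i : ℕ) := by
  simp_rw [sum_filter]
  rw [sum_comm]
  refine sum_congr rfl fun i _ => ?_
  rw [← sum_filter, sum_const, nsmul_eq_mul, mul_comm, ← Nat.Ioc_filter_dvd_card_eq_div]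
  rfl

theorem sum_div_mul_div_eq_sub_sum_mod_div {K : Type*} [Field K] (s : Finset ℕ) (f : ℕ → ℕ)
    (M : ℕ) : ∑ d ∈ s, (f d : K) / d * (M / f d : ℕ) =
      M * ∑ d ∈ s, (d : K)⁻¹ - ∑ d ∈ s, ((M % f d : ℕ) : K) / d := by
  rw [mul_sum, ← sum_sub_distrib]
  refine sum_congr rfl fun d _ => ?_
  have hM : (M : K) = (M % f d : ℕ) + f d * (M / f d : ℕ) := by
    rw [← Nat.cast_mul, ← Nat.cast_add, Nat.mod_add_div]
  linear_combination -(d : K)⁻¹ * hM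

theorem sum_div_le_harmonic_of_dvd {g n : ℕ} {A : Finset ℕ} (hA : A ⊆ Icc 1 n)
    (hgA : ∀ d ∈ A, g ∣ d) : ∑ d ∈ A, (g : ℝ) / d ≤ harmonic n := by
  have hpos : ∀ d ∈ A, 0 < d := fun d hd => (mem_Icc.mp (hA hd)).1
  calc ∑ d ∈ A, (g : ℝ) / d = ∑ e ∈ A.image (· / g), (e : ℝ)⁻¹ := by
        rw [sum_image fun a ha b hb h => (Nat.div_left_inj (hgA a ha) (hgA b hb)).mp h]
        refine sum_congr rfl fun d hd => ?_
        rw [Nat.cast_div (hgA d hd), inv_div]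
        exact_mod_cast (Nat.pos_of_dvd_of_pos (hgA d hd) (hpos d hd)).ne'
    _ ≤ ∑ e ∈ Icc 1 n, (e : ℝ)⁻¹ := by
        refine sum_le_sum_of_subset_of_nonneg ?_ fun _ _ _ => by positivity
        intro e he
        obtain ⟨d, hd, rfl⟩ := mem_image.mp he
        have hdn := mem_Icc.mp (hA hd)
        exact mem_Icc.mpr ⟨Nat.div_pos (Nat.le_of_dvd (hpos d hd) (hgA d hd))
          (Nat.pos_of_dvd_of_pos (hgA d hd) (hpos d hd)), (Nat.div_le_self d g).trans hdn.2⟩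
    _ = harmonic n := by simp [harmonic_eq_sum_Icc]

theorem sum_gcd_div_le_card_divisors_mul_harmonic {q : ℕ} (hq : q ≠ 0) (n : ℕ) :
    ∑ d ∈ Icc 1 n, (d.gcd q : ℝ) / d ≤ #q.divisors * harmonic n := by
  have hmaps : ∀ d ∈ Icc 1 n, d.gcd q ∈ q.divisors :=
    fun d _ => Nat.mem_divisors.mpr ⟨d.gcd_dvd_right q, hq⟩
  rw [← sum_fiberwise_of_maps_to hmaps, ← nsmul_eq_mul]
  refine sum_le_card_nsmul _ _ _ fun g _ => ?_
  calc ∑ d ∈ Icc 1 n with d.gcd q = g, (d.gcd q : ℝ) / d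
      = ∑ d ∈ Icc 1 n with d.gcd q = g, (g : ℝ) / d :=
        sum_congr rfl fun d hd => by rw [(mem_filter.mp hd).2]
    _ ≤ harmonic n := sum_div_le_harmonic_of_dvd (filter_subset _ _)
        fun d hd => (mem_filter.mp hd).2 ▸ d.gcd_dvd_left q

theorem abs_gcd_sum_sub_mul_harmonic_le {q : ℕ} (hq : q ≠ 0) (M n : ℕ) :
    |∑ r ∈ Icc 1 M, ∑ d ∈ Icc 1 n with d.gcd q ∣ r, (d.gcd q : ℝ) / d - M * harmonic n|
      ≤ #q.divisors * harmonic n := by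
  have hH : (harmonic n : ℝ) = ∑ d ∈ Icc 1 n, (d : ℝ)⁻¹ := by simp [harmonic_eq_sum_Icc]
  rw [sum_Icc_sum_filter_dvd_eq_sum_mul_div _ (fun d : ℕ => d.gcd q)
      (fun d : ℕ => (d.gcd q : ℝ) / d), sum_div_mul_div_eq_sub_sum_mod_div, ← hH,
    sub_sub_cancel_left, abs_neg, abs_of_nonneg (sum_nonneg fun _ _ => by positivity)]
  refine le_trans (sum_le_sum fun d hd => ?_) (sum_gcd_div_le_card_divisors_mul_harmonic hq n)
  gcongr
  exact (Nat.mod_lt _ (Nat.gcd_pos_of_pos_left q (mem_Icc.mp hd).1)).le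

/-- For every ε > 0 there is C (depending only on ε) such that for all real N, K ≥ 1 and
all positive integers q, |∑_{r ≤ K} ∑_{d ≤ N, (d,q)∣r} (d,q)/d − K log N| ≤ C(Kq^ε + q^ε log N). -/
theorem gcd_sum_asymptotic_two (ε : ℝ) (hε : 0 < ε) :
    ∃ C : ℝ, ∀ N K : ℝ, 1 ≤ N → 1 ≤ K → ∀ q : ℕ, 0 < q →
      |(∑ r ∈ Finset.Icc 1 ⌊K⌋₊,
          ∑ d ∈ (Finset.Icc 1 ⌊N⌋₊).filter (fun d : ℕ => Nat.gcd d q ∣ r),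
            (Nat.gcd d q : ℝ) / (d : ℝ)) - K * Real.log N| ≤
        C * (K * (q : ℝ) ^ ε + (q : ℝ) ^ ε * Real.log N) := by
  obtain ⟨C, hC⟩ := Nat.exists_card_divisors_le_rpow hε
  have hC1 : 1 ≤ C := by simpa using hC 1 one_ne_zero
  refine ⟨C + 1, fun N K hN hK q hq => ?_⟩
  have hqε : 1 ≤ (q : ℝ) ^ ε := one_le_rpow (by exact_mod_cast hq) hε.le
  have hL : 0 ≤ log N := log_nonneg hN
  have hH : (harmonic ⌊N⌋₊ : ℝ) ≤ 1 + log N := by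
    linarith [(abs_le.mp (abs_harmonic_floor_sub_log_le hN)).2]
  calc _ ≤ |∑ r ∈ Icc 1 ⌊K⌋₊, ∑ d ∈ Icc 1 ⌊N⌋₊ with d.gcd q ∣ r, (d.gcd q : ℝ) / d
            - ⌊K⌋₊ * harmonic ⌊N⌋₊| + |⌊K⌋₊ * (harmonic ⌊N⌋₊ : ℝ) - K * log N| :=
          abs_sub_le _ _ _
    _ ≤ #q.divisors * harmonic ⌊N⌋₊ + (K + log N) :=
        add_le_add (abs_gcd_sum_sub_mul_harmonic_le hq.ne' _ _)
          (abs_floor_mul_harmonic_floor_sub_le hN hK)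
    _ ≤ C * q ^ ε * (1 + log N) + (K + log N) := by
        gcongr
        · exact_mod_cast (harmonic_pos (Nat.floor_pos.mpr hN).ne').le
        · exact hC q hq.ne'
    _ ≤ (C + 1) * (K * q ^ ε + q ^ ε * log N) := by
        nlinarith [mul_nonneg (by positivity : 0 ≤ C * (q : ℝ) ^ ε) (sub_nonneg.mpr hK),
          mul_nonneg (by linarith : 0 ≤ K) (sub_nonneg.mpr hqε),
          mul_nonneg hL (sub_nonneg.mpr hqε)]
end

section
/- Let δ > 0 and ε > 0. There exists a constant C (depending only on δ and ε) such that for all real x ≥ 2, all real N ≥ 2, and all positive integers q with q ≤ x^{1−δ} and N ≥ q^ε, ∑_{n ≤ x, gcd(n,q)=1} τ_N(n)/n ≤ C · φ(q)² (log x)(log N) / q². -/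
open Finset
open scoped Classical

/-!
Expanding `τ_N(n) = ∑_{d ∣ n, d ≤ N} 1` and writing `n = d m` bounds the sum by `S(N, q) S(x, q)`,
where `S(y, q) = ∑_{m ≤ y, (m, q) = 1} 1/m`; so it suffices that `S(y, q) ≪_ε (φ(q)/q) log y`
whenever `q^ε ≤ y`. Multiply `S(y, q)` by the sum of `1/k` over the squarefree `k ≤ y` built from
primes dividing `q`: the products `m k` are distinct integers `≤ y²`, so the product is
`≤ 4 log y`. Without the restriction `k ≤ y` the second sum is
`∏_{p ∣ q} (1 + 1/p) ≥ q / (2 φ(q))`, because `∏ (1 - 1/p²) ≥ 1/2`, and the terms with `k > y`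
contribute at most `2^{ω(q)} / y`, which is small since `2^{ω(q)} ≪_ε q^{ε/2} ≤ √y`.
-/

open Real

lemma sum_Icc_inv_le_add_two_mul_log {M k : ℕ} {y : ℝ} (hy : 2 ≤ y) (hM : (M : ℝ) ≤ y ^ k) :
    ∑ n ∈ Icc 1 M, (n : ℝ)⁻¹ ≤ (k + 2) * log y := by
  have hlog : 1 ≤ 2 * log y := by
    linarith [Real.log_two_gt_d9, Real.log_le_log two_pos hy]
  rcases M.eq_zero_or_pos with rfl | hM0
  · simp only [Icc_eq_empty_of_lt one_pos, sum_empty]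
    exact mul_nonneg (by positivity) (by linarith)
  have hharm : ∑ n ∈ Icc 1 M, (n : ℝ)⁻¹ ≤ 1 + log M := by
    simpa [harmonic_eq_sum_Icc] using harmonic_le_one_add_log M
  have hlogM : log M ≤ k * log y := by
    rw [← Real.log_pow]
    exact Real.log_le_log (by exact_mod_cast hM0) hM
  linarith

lemma exists_two_pow_card_primeFactors_le {ε : ℝ} (hε : 0 < ε) :
    ∃ c : ℝ, 0 < c ∧ ∀ q : ℕ, 0 < q → (2 : ℝ) ^ #q.primeFactors ≤ c * (q : ℝ) ^ ε := by
  set P : ℕ := ⌈(2 : ℝ) ^ ε⁻¹⌉₊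
  refine ⟨2 ^ P, by positivity, fun q hq => ?_⟩
  -- a prime `p > P` already satisfies `2 ≤ p ^ ε`; the others cost a factor `2` each
  have hfactor : ∀ p ∈ q.primeFactors, (2 : ℝ) ≤ (if p ≤ P then 2 else 1) * (p : ℝ) ^ ε := by
    intro p hp
    have hp1 : (1 : ℝ) ≤ p := by exact_mod_cast (Nat.prime_of_mem_primeFactors hp).one_le
    split_ifs with hpP
    · simpa using Real.one_le_rpow hp1 hε.le
    · have hPp : (2 : ℝ) ^ ε⁻¹ ≤ p :=
        (Nat.le_ceil _).trans (by exact_mod_cast (not_le.mp hpP).le)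
      calc (2 : ℝ) = ((2 : ℝ) ^ ε⁻¹) ^ ε := by
            rw [← Real.rpow_mul zero_le_two, inv_mul_cancel₀ hε.ne', Real.rpow_one]
        _ ≤ 1 * (p : ℝ) ^ ε := by rw [one_mul]; gcongr
  have hsmall : ∏ p ∈ q.primeFactors, (if p ≤ P then (2 : ℝ) else 1) ≤ 2 ^ P := by
    rw [prod_ite, prod_const, prod_const_one, mul_one]
    refine pow_le_pow_right₀ one_le_two
      ((card_le_card fun p hp => ?_).trans (Nat.card_Icc 1 P).le)
    obtain ⟨hpq, hpP⟩ := mem_filter.mp hp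
    exact mem_Icc.mpr ⟨(Nat.prime_of_mem_primeFactors hpq).one_le, hpP⟩
  have hlarge : ∏ p ∈ q.primeFactors, (p : ℝ) ≤ q := by
    rw [← Nat.cast_prod]
    exact_mod_cast Nat.le_of_dvd hq (Nat.prod_primeFactors_dvd q)
  calc (2 : ℝ) ^ #q.primeFactors = ∏ p ∈ q.primeFactors, (2 : ℝ) := (prod_const _).symm
    _ ≤ ∏ p ∈ q.primeFactors, (if p ≤ P then 2 else 1) * (p : ℝ) ^ ε :=
        prod_le_prod (fun _ _ => zero_le_two) hfactor
    _ = (∏ p ∈ q.primeFactors, if p ≤ P then (2 : ℝ) else 1) *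
          (∏ p ∈ q.primeFactors, (p : ℝ)) ^ ε := by
        rw [prod_mul_distrib, Real.finsetProd_rpow _ _ fun p _ => Nat.cast_nonneg p]
    _ ≤ 2 ^ P * (q : ℝ) ^ ε := by gcongr

lemma prod_Icc_one_sub_inv_sq {M : ℕ} (hM : 1 ≤ M) :
    ∏ n ∈ Icc 2 M, (1 - ((n : ℝ) ^ 2)⁻¹) = (M + 1) / (2 * M) := by
  induction M, hM using Nat.le_induction with
  | base => norm_num
  | succ m hm ih =>
    rw [prod_Icc_succ_top (by omega), ih]
    have : (m : ℝ) ≠ 0 := by positivity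
    push_cast
    field_simp
    ring

lemma one_half_le_prod_one_sub_inv_sq {s : Finset ℕ} (hs : ∀ n ∈ s, 2 ≤ n) :
    1 / 2 ≤ ∏ n ∈ s, (1 - ((n : ℝ) ^ 2)⁻¹) := by
  set M := s.sup id + 1
  have hsub : s ⊆ Icc 2 M := fun n hn =>
    mem_Icc.mpr ⟨hs n hn, (le_sup (f := id) hn).trans (Nat.le_succ _)⟩
  have hfactor : ∀ n ∈ Icc 2 M, 0 ≤ 1 - ((n : ℝ) ^ 2)⁻¹ := fun n hn => by
    have : (2 : ℝ) ≤ n := by exact_mod_cast (mem_Icc.mp hn).1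
    linarith [inv_le_one_of_one_le₀ (by nlinarith : (1 : ℝ) ≤ (n : ℝ) ^ 2)]
  calc 1 / 2 ≤ ((M : ℝ) + 1) / (2 * M) := by
        rw [div_le_div_iff₀ two_pos (by positivity)]
        linarith
    _ = ∏ n ∈ Icc 2 M, (1 - ((n : ℝ) ^ 2)⁻¹) := (prod_Icc_one_sub_inv_sq (by omega)).symm
    _ ≤ ∏ n ∈ s, (1 - ((n : ℝ) ^ 2)⁻¹) :=
        prod_le_prod_of_subset_of_le_one hsub hfactor fun n _ _ => by
          simp only [sub_le_self_iff, inv_nonneg]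
          positivity

lemma one_half_le_sum_powerset_prod_inv_mul_prod_one_sub_inv {s : Finset ℕ}
    (hs : ∀ p ∈ s, 2 ≤ p) :
    1 / 2 ≤ (∑ t ∈ s.powerset, (∏ p ∈ t, (p : ℝ))⁻¹) * ∏ p ∈ s, (1 - (p : ℝ)⁻¹) := by
  simp_rw [← prod_inv_distrib]
  rw [← prod_one_add, ← prod_mul_distrib]
  convert one_half_le_prod_one_sub_inv_sq hs using 3
  ring

lemma sum_powerset_filter_floor_lt_prod_inv_le (s : Finset ℕ) {y : ℝ} (hy : 0 < y) :
    ∑ t ∈ s.powerset with ⌊y⌋₊ < ∏ p ∈ t, p, (∏ p ∈ t, (p : ℝ))⁻¹ ≤ 2 ^ #s / y := by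
  have hterm : ∀ t ∈ {t ∈ s.powerset | ⌊y⌋₊ < ∏ p ∈ t, p}, (∏ p ∈ t, (p : ℝ))⁻¹ ≤ y⁻¹ := by
    intro t ht
    rw [← Nat.cast_prod]
    exact inv_anti₀ hy (Nat.lt_of_floor_lt (mem_filter.mp ht).2).le
  calc _ ≤ #{t ∈ s.powerset | ⌊y⌋₊ < ∏ p ∈ t, p} • y⁻¹ := sum_le_card_nsmul _ _ _ hterm
    _ ≤ #s.powerset • y⁻¹ := by gcongr; exact filter_subset _ _
    _ = 2 ^ #s / y := by rw [card_powerset, nsmul_eq_mul, div_eq_mul_inv]; push_cast; rfl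

noncomputable def coprimeHarmonic (F q : ℕ) : ℝ := ∑ m ∈ Icc 1 F with m.Coprime q, (m : ℝ)⁻¹

lemma coprimeHarmonic_nonneg (F q : ℕ) : 0 ≤ coprimeHarmonic F q :=
  sum_nonneg fun _ _ => by positivity

lemma coprimeHarmonic_mul_sum_powerset_prod_inv_le (F q : ℕ) :
    coprimeHarmonic F q *
        ∑ t ∈ q.primeFactors.powerset with ∏ p ∈ t, p ≤ F, (∏ p ∈ t, (p : ℝ))⁻¹ ≤
      ∑ n ∈ Icc 1 (F * F), (n : ℝ)⁻¹ := by
  set A := {m ∈ Icc 1 F | m.Coprime q}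
  set T := {t ∈ q.primeFactors.powerset | ∏ p ∈ t, p ≤ F}
  have hprime : ∀ t ∈ T, ∀ p ∈ t, p.Prime := fun t ht p hp =>
    Nat.prime_of_mem_primeFactors (mem_powerset.mp (mem_filter.mp ht).1 hp)
  have hcop : ∀ m ∈ A, ∀ t ∈ T, (∏ p ∈ t, p).Coprime m := fun m hm t ht =>
    ((mem_filter.mp hm).2.coprime_dvd_right ((prod_dvd_prod_of_subset _ _ id
      (mem_powerset.mp (mem_filter.mp ht).1)).trans (Nat.prod_primeFactors_dvd q))).symm
  have hinj : Set.InjOn (fun x : ℕ × Finset ℕ => x.1 * ∏ p ∈ x.2, p)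
      (A ×ˢ T : Finset (ℕ × Finset ℕ)) := by
    rintro ⟨m₁, t₁⟩ h₁ ⟨m₂, t₂⟩ h₂ (h : m₁ * _ = m₂ * _)
    simp only [mem_coe, mem_product] at h₁ h₂
    have hprod : ∏ p ∈ t₁, p = ∏ p ∈ t₂, p := Nat.dvd_antisymm
      ((hcop m₂ h₂.1 t₁ h₁.2).dvd_of_dvd_mul_left ⟨m₁, by rw [← h]; ring⟩)
      ((hcop m₁ h₁.1 t₂ h₂.2).dvd_of_dvd_mul_left ⟨m₂, by rw [h]; ring⟩)
    have ht : t₁ = t₂ := by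
      rw [← Nat.primeFactors_prod (hprime t₁ h₁.2), hprod,
        Nat.primeFactors_prod (hprime t₂ h₂.2)]
    subst ht
    rw [Nat.eq_of_mul_eq_mul_right (prod_pos fun p hp => (hprime t₁ h₁.2 p hp).pos) h]
  have himage :
      (A ×ˢ T).image (fun x : ℕ × Finset ℕ => x.1 * ∏ p ∈ x.2, p) ⊆ Icc 1 (F * F) := by
    simp only [subset_iff, mem_image, mem_product, Prod.exists]
    rintro _ ⟨m, t, ⟨hm, ht⟩, rfl⟩
    obtain ⟨hm1, hmF⟩ := mem_Icc.mp (mem_filter.mp hm).1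
    have ht1 : 1 ≤ ∏ p ∈ t, p := prod_pos fun p hp => (hprime t ht p hp).pos
    exact mem_Icc.mpr ⟨Nat.mul_pos hm1 ht1, Nat.mul_le_mul hmF (mem_filter.mp ht).2⟩
  calc coprimeHarmonic F q * ∑ t ∈ T, (∏ p ∈ t, (p : ℝ))⁻¹
      = ∑ x ∈ A ×ˢ T, (↑(x.1 * ∏ p ∈ x.2, p) : ℝ)⁻¹ := by
        rw [coprimeHarmonic, sum_mul_sum, sum_product]
        push_cast
        simp only [mul_inv]
        rfl
    _ = ∑ n ∈ (A ×ˢ T).image (fun x : ℕ × Finset ℕ => x.1 * ∏ p ∈ x.2, p), (n : ℝ)⁻¹ :=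
        (sum_image (f := fun n : ℕ => (n : ℝ)⁻¹) hinj).symm
    _ ≤ ∑ n ∈ Icc 1 (F * F), (n : ℝ)⁻¹ :=
        sum_le_sum_of_subset_of_nonneg himage fun _ _ _ => by positivity

lemma totient_div_eq_prod_one_sub_inv {q : ℕ} (hq : 0 < q) :
    (q.totient : ℝ) / q = ∏ p ∈ q.primeFactors, (1 - (p : ℝ)⁻¹) := by
  have h := congrArg ((↑) : ℚ → ℝ) (Nat.totient_eq_mul_prod_factors q)
  push_cast at h
  rw [h]
  field_simp

lemma coprimeHarmonic_floor_le_three_mul_log {y : ℝ} (hy : 2 ≤ y) (q : ℕ) :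
    coprimeHarmonic ⌊y⌋₊ q ≤ 3 * log y := by
  calc coprimeHarmonic ⌊y⌋₊ q ≤ ∑ m ∈ Icc 1 ⌊y⌋₊, (m : ℝ)⁻¹ :=
        sum_le_sum_of_subset_of_nonneg (filter_subset _ _) fun _ _ _ => by positivity
    _ ≤ ((1 : ℕ) + 2) * log y :=
        sum_Icc_inv_le_add_two_mul_log hy (by simpa using Nat.floor_le (by linarith : 0 ≤ y))
    _ = 3 * log y := by norm_num

lemma coprimeHarmonic_floor_le_of_four_mul_two_pow_le {y : ℝ} (hy : 2 ≤ y) {q : ℕ} (hq : 0 < q)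
    (hω : 4 * 2 ^ #q.primeFactors ≤ y) :
    coprimeHarmonic ⌊y⌋₊ q ≤ 16 * (q.totient / q) * log y := by
  set θ : ℝ := q.totient / q with hθ
  set s := q.primeFactors
  have hy0 : 0 < y := by linarith
  have hθ0 : 0 ≤ θ := by positivity
  have hθ1 : θ ≤ 1 := div_le_one_of_le₀ (by exact_mod_cast Nat.totient_le q) (Nat.cast_nonneg q)
  have hfull : 1 / 2 ≤ (∑ t ∈ s.powerset, (∏ p ∈ t, (p : ℝ))⁻¹) * θ := by
    rw [hθ, totient_div_eq_prod_one_sub_inv hq]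
    exact one_half_le_sum_powerset_prod_inv_mul_prod_one_sub_inv fun p hp =>
      (Nat.prime_of_mem_primeFactors hp).two_le
  have htail : ∑ t ∈ s.powerset with ⌊y⌋₊ < ∏ p ∈ t, p, (∏ p ∈ t, (p : ℝ))⁻¹ ≤ 1 / 4 := by
    refine (sum_powerset_filter_floor_lt_prod_inv_le s hy0).trans ?_
    rw [div_le_div_iff₀ hy0 four_pos]
    linarith
  have hsplit := sum_filter_add_sum_filter_not s.powerset (fun t => ∏ p ∈ t, p ≤ ⌊y⌋₊)
    fun t => (∏ p ∈ t, (p : ℝ))⁻¹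
  simp only [not_le] at hsplit
  rw [← hsplit] at hfull
  -- removing the tail costs at most `1/4 ≤ 1/(4θ)`
  have hsmall :
      1 / 4 ≤ (∑ t ∈ s.powerset with ∏ p ∈ t, p ≤ ⌊y⌋₊, (∏ p ∈ t, (p : ℝ))⁻¹) * θ := by
    nlinarith [mul_le_mul_of_nonneg_right htail hθ0]
  have hpair : coprimeHarmonic ⌊y⌋₊ q *
      ∑ t ∈ s.powerset with ∏ p ∈ t, p ≤ ⌊y⌋₊, (∏ p ∈ t, (p : ℝ))⁻¹ ≤ 4 * log y := by
    have hF : ((⌊y⌋₊ * ⌊y⌋₊ : ℕ) : ℝ) ≤ y ^ 2 := by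
      push_cast
      have := Nat.floor_le hy0.le
      nlinarith
    calc _ ≤ ∑ n ∈ Icc 1 (⌊y⌋₊ * ⌊y⌋₊), (n : ℝ)⁻¹ :=
          coprimeHarmonic_mul_sum_powerset_prod_inv_le _ q
      _ ≤ ((2 : ℕ) + 2) * log y := sum_Icc_inv_le_add_two_mul_log hy hF
      _ = 4 * log y := by norm_num
  have hS := coprimeHarmonic_nonneg ⌊y⌋₊ q
  nlinarith [mul_le_mul_of_nonneg_left hsmall hS, mul_le_mul_of_nonneg_right hpair hθ0]

lemma exists_coprimeHarmonic_floor_le {ε : ℝ} (hε : 0 < ε) :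
    ∃ C : ℝ, 0 ≤ C ∧ ∀ y : ℝ, 2 ≤ y → ∀ q : ℕ, 0 < q → (q : ℝ) ^ ε ≤ y →
      coprimeHarmonic ⌊y⌋₊ q ≤ C * (q.totient / q) * log y := by
  obtain ⟨c, hc, hω⟩ := exists_two_pow_card_primeFactors_le (half_pos hε)
  have hY : 0 ≤ ((4 * c) ^ 2) ^ ε⁻¹ := by positivity
  refine ⟨16 + 3 * ((4 * c) ^ 2) ^ ε⁻¹, by positivity, fun y hy q hq hqy => ?_⟩
  have hθ : 0 ≤ (q.totient : ℝ) / q := by positivity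
  have hlog : 0 ≤ log y := Real.log_nonneg (by linarith)
  by_cases hYy : (4 * c) ^ 2 ≤ y
  · have hω' : 4 * 2 ^ #q.primeFactors ≤ y := by
      have hsqrt : (q : ℝ) ^ (ε / 2) ≤ √y := by
        rw [Real.sqrt_eq_rpow, div_eq_mul_one_div, Real.rpow_mul (Nat.cast_nonneg q)]
        gcongr
      have hc' : 4 * c ≤ √y := by
        have := Real.sqrt_le_sqrt hYy
        rwa [Real.sqrt_sq (by positivity)] at this
      calc 4 * 2 ^ #q.primeFactors ≤ 4 * (c * √y) := by
            gcongr
            exact (hω q hq).trans (by gcongr)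
        _ ≤ √y * √y := by rw [← mul_assoc]; gcongr
        _ = y := Real.mul_self_sqrt (by linarith)
    calc coprimeHarmonic ⌊y⌋₊ q ≤ 16 * (q.totient / q) * log y :=
          coprimeHarmonic_floor_le_of_four_mul_two_pow_le hy hq hω'
      _ ≤ _ := by gcongr; linarith
  · -- here `q` is bounded, and `φ(q) ≥ 1` absorbs the trivial bound
    have hqY : (q : ℝ) ≤ ((4 * c) ^ 2) ^ ε⁻¹ := by
      rw [← Real.rpow_rpow_inv (Nat.cast_nonneg q) hε.ne']
      gcongr
      linarith
    have hφ : 1 ≤ ((4 * c) ^ 2) ^ ε⁻¹ * (q.totient / q : ℝ) := by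
      calc (1 : ℝ) ≤ q.totient := by exact_mod_cast Nat.totient_pos.mpr hq
        _ = q * (q.totient / q : ℝ) := by field_simp
        _ ≤ ((4 * c) ^ 2) ^ ε⁻¹ * (q.totient / q : ℝ) := by gcongr
    calc coprimeHarmonic ⌊y⌋₊ q ≤ 3 * log y := coprimeHarmonic_floor_le_three_mul_log hy q
      _ ≤ 3 * (((4 * c) ^ 2) ^ ε⁻¹ * (q.totient / q)) * log y := by nlinarith
      _ ≤ _ := by nlinarith

lemma sum_filter_dvd_inv_le_inv_mul_coprimeHarmonic (X q : ℕ) {d : ℕ} (hd : 0 < d) :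
    ∑ n ∈ Icc 1 X with n.Coprime q ∧ d ∣ n, (n : ℝ)⁻¹ ≤ (d : ℝ)⁻¹ * coprimeHarmonic X q := by
  set A := {m ∈ Icc 1 X | m.Coprime q}
  have hsub : {n ∈ Icc 1 X | n.Coprime q ∧ d ∣ n} ⊆ A.image (d * ·) := by
    intro n hn
    obtain ⟨hnX, hnq, m, rfl⟩ := by simpa only [mem_filter] using hn
    obtain ⟨hm1, hmX⟩ := mem_Icc.mp hnX
    refine mem_image.mpr ⟨m, mem_filter.mpr ⟨mem_Icc.mpr ⟨?_, ?_⟩, hnq.coprime_mul_left⟩, rfl⟩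
    · exact Nat.pos_of_mul_pos_left hm1
    · exact (Nat.le_mul_of_pos_left m hd).trans hmX
  calc ∑ n ∈ Icc 1 X with n.Coprime q ∧ d ∣ n, (n : ℝ)⁻¹ ≤ ∑ n ∈ A.image (d * ·), (n : ℝ)⁻¹ :=
        sum_le_sum_of_subset_of_nonneg hsub fun _ _ _ => by positivity
    _ = ∑ m ∈ A, (↑(d * m) : ℝ)⁻¹ := sum_image fun _ _ _ _ h => Nat.eq_of_mul_eq_mul_left hd h
    _ = (d : ℝ)⁻¹ * coprimeHarmonic X q := by
        rw [coprimeHarmonic, mul_sum]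
        push_cast
        simp only [mul_inv]
        rfl

lemma sum_tauLe_div_le_coprimeHarmonic_mul (N : ℝ) (X q : ℕ) :
    ∑ n ∈ Icc 1 X with n.Coprime q, (tauLe N n : ℝ) / n ≤
      coprimeHarmonic ⌊N⌋₊ q * coprimeHarmonic X q := by
  set A := {n ∈ Icc 1 X | n.Coprime q}
  set D := {d ∈ Icc 1 ⌊N⌋₊ | d.Coprime q}
  have htau : ∀ n ∈ A, (tauLe N n : ℝ) / n ≤ ∑ d ∈ D with d ∣ n, (n : ℝ)⁻¹ := by
    intro n hn
    obtain ⟨hnX, hnq⟩ := mem_filter.mp hn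
    rw [sum_const, nsmul_eq_mul, div_eq_mul_inv, tauLe]
    gcongr
    intro d hd
    obtain ⟨hdn, hdN⟩ := by simpa only [mem_filter, Nat.mem_divisors] using hd
    have hd0 : 0 < d := Nat.pos_of_dvd_of_pos hdn.1 (mem_Icc.mp hnX).1
    exact mem_filter.mpr ⟨mem_filter.mpr ⟨mem_Icc.mpr ⟨hd0, Nat.le_floor hdN⟩,
      hnq.coprime_dvd_left hdn.1⟩, hdn.1⟩
  calc ∑ n ∈ A, (tauLe N n : ℝ) / n ≤ ∑ n ∈ A, ∑ d ∈ D with d ∣ n, (n : ℝ)⁻¹ := sum_le_sum htau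
    _ = ∑ d ∈ D, ∑ n ∈ Icc 1 X with n.Coprime q ∧ d ∣ n, (n : ℝ)⁻¹ := by
        refine sum_comm' fun n d => ?_
        simp only [A, D, mem_filter]
        tauto
    _ ≤ ∑ d ∈ D, (d : ℝ)⁻¹ * coprimeHarmonic X q := sum_le_sum fun d hd =>
        sum_filter_dvd_inv_le_inv_mul_coprimeHarmonic X q (mem_Icc.mp (mem_filter.mp hd).1).1
    _ = coprimeHarmonic ⌊N⌋₊ q * coprimeHarmonic X q := by rw [← sum_mul]; rfl

/-- Let δ, ε > 0.  There is a constant C (depending only on δ, ε) such that for all real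
x ≥ 2, N ≥ 2 and all positive integers q with q ≤ x^{1−δ} and N ≥ q^ε,
∑_{n ≤ x, (n,q)=1} τ_N(n)/n ≤ C·φ(q)²(log x)(log N)/q². -/
theorem tau_le_coprime_harmonic_sum (δ ε : ℝ) (hδ : 0 < δ) (hε : 0 < ε) :
    ∃ C : ℝ, ∀ x N : ℝ, 2 ≤ x → 2 ≤ N → ∀ q : ℕ, 0 < q →
      (q : ℝ) ≤ x ^ (1 - δ) → (q : ℝ) ^ ε ≤ N →
      (∑ n ∈ (Finset.Icc 1 ⌊x⌋₊).filter (fun n : ℕ => Nat.Coprime n q),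
        (tauLe N n : ℝ) / (n : ℝ)) ≤
        C * (q.totient : ℝ) ^ 2 * Real.log x * Real.log N / (q : ℝ) ^ 2 := by
  obtain ⟨C₁, hC₁, hN⟩ := exists_coprimeHarmonic_floor_le hε
  obtain ⟨C₂, -, hx⟩ := exists_coprimeHarmonic_floor_le one_pos
  refine ⟨C₁ * C₂, fun x N hx2 hN2 q hq hqx hqN => ?_⟩
  have hqx' : (q : ℝ) ^ (1 : ℝ) ≤ x := by
    rw [Real.rpow_one]
    exact hqx.trans (Real.rpow_le_self_of_one_le (by linarith) (by linarith))
  calc _ ≤ coprimeHarmonic ⌊N⌋₊ q * coprimeHarmonic ⌊x⌋₊ q :=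
        sum_tauLe_div_le_coprimeHarmonic_mul N _ q
    _ ≤ (C₁ * (q.totient / q) * log N) * (C₂ * (q.totient / q) * log x) :=
        mul_le_mul (hN N hN2 q hq hqN) (hx x hx2 q hq hqx') (coprimeHarmonic_nonneg _ q)
          (mul_nonneg (by positivity) (Real.log_nonneg (by linarith)))
    _ = C₁ * C₂ * (q.totient : ℝ) ^ 2 * log x * log N / (q : ℝ) ^ 2 := by ring
end

section
/- Let δ ∈ (0,1). There exists a constant C (depending only on δ) such that for all N ≥ 1, all positive integers q with q ≤ N^{1−δ}, and all integers r with gcd(r,q) = 1, ∑_{m ≡ r (mod q)} τ_N^*(m) ≤ C · N² φ(q) / q². -/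
open Finset
open scoped Classical

open scoped Nat

/-
τ_N^*(m) counts the pairs (a, b) ∈ [1, N]² with ab = m, so the sum counts the pairs with
ab ≡ r (mod q).  Since r is a unit mod q, a must be coprime to q, and then b is confined to a single
residue class.  Cutting [1, N] into at most N/q + 1 ≤ 2N/q blocks of length q (this is where q ≤ N is
used), there are at most (2N/q)·φ(q) choices for a and 2N/q for b.
-/

theorem card_le_mul_card_of_mod_mem {S R : Finset ℕ} {q K : ℕ} (hK : ∀ a ∈ S, a ≤ K)
    (hR : ∀ a ∈ S, a % q ∈ R) : #S ≤ (K / q + 1) * #R := by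
  rw [← card_range (K / q + 1), ← card_product]
  refine card_le_card_of_injOn (fun a => (a / q, a % q)) (fun a ha => ?_) (fun a _ b _ hab => ?_)
  · simpa [Nat.lt_succ_iff] using ⟨Nat.div_le_div_right (hK a ha), hR a ha⟩
  · obtain ⟨hdiv, hmod⟩ := Prod.mk.inj hab
    rw [← Nat.div_add_mod a q, ← Nat.div_add_mod b q, hdiv, hmod]

theorem card_filter_Icc_coprime_le {q : ℕ} (hq : 0 < q) (K : ℕ) :
    #{a ∈ Icc 1 K | a.Coprime q} ≤ (K / q + 1) * φ q := by
  rw [Nat.totient_eq_card_coprime]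
  refine card_le_mul_card_of_mod_mem (fun a ha => (mem_Icc.mp (mem_filter.mp ha).1).2)
    fun a ha => mem_filter.mpr ⟨mem_range.mpr (Nat.mod_lt a hq), ?_⟩
  rw [Nat.Coprime, Nat.gcd_comm, ← Nat.gcd_rec]
  exact Nat.coprime_comm.mp (mem_filter.mp ha).2

theorem card_filter_Icc_mul_eq_le {q : ℕ} {a : ZMod q} (ha : IsUnit a) (u : ZMod q) (L : ℕ) :
    #{b ∈ Icc 1 L | a * ((b : ℕ) : ZMod q) = u} ≤ L / q + 1 := by
  refine (card_le_mul_card_of_mod_mem (q := q) (R := {(↑ha.unit⁻¹ * u : ZMod q).val})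
    (fun b hb => (mem_Icc.mp (mem_filter.mp hb).1).2) fun b hb => ?_).trans_eq (by simp)
  have hb' : ha.unit * ((b : ℕ) : ZMod q) = u := (mem_filter.mp hb).2
  rw [mem_singleton, ← ZMod.val_natCast, (Units.eq_inv_mul_iff_mul_eq _).mpr hb']

theorem card_filter_mul_eq_unit_le {q : ℕ} (hq : 0 < q) {u : ZMod q} (hu : IsUnit u) (K L : ℕ) :
    #{p ∈ Icc 1 K ×ˢ Icc 1 L | ((p.1 * p.2 : ℕ) : ZMod q) = u} ≤
      (K / q + 1) * φ q * (L / q + 1) := by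
  calc _ ≤ #({a ∈ Icc 1 K | a.Coprime q}.biUnion
          fun a => {a} ×ˢ {b ∈ Icc 1 L | (a : ZMod q) * ((b : ℕ) : ZMod q) = u}) := by
        refine card_le_card fun p hp => ?_
        obtain ⟨hp, hpu⟩ := mem_filter.mp hp
        obtain ⟨ha, hb⟩ := mem_product.mp hp
        push_cast at hpu
        have hcop : p.1.Coprime q :=
          (ZMod.isUnit_iff_coprime _ _).mp (isUnit_of_mul_isUnit_left (hpu ▸ hu))
        simp only [mem_biUnion, mem_filter, mem_product, mem_singleton]
        exact ⟨p.1, ⟨ha, hcop⟩, rfl, hb, hpu⟩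
    _ ≤ #{a ∈ Icc 1 K | a.Coprime q} * (L / q + 1) := by
        refine card_biUnion_le_card_mul _ _ _ fun a ha => ?_
        rw [singleton_product, card_map]
        exact card_filter_Icc_mul_eq_le ((ZMod.isUnit_iff_coprime _ _).mpr (mem_filter.mp ha).2) u L
    _ ≤ (K / q + 1) * φ q * (L / q + 1) := by
        gcongr
        exact card_filter_Icc_coprime_le hq K

theorem tauMN_le_card_filter_mul_eq (M N : ℝ) (m : ℕ) :
    tauMN M N m ≤ #{p ∈ Icc 1 ⌊M⌋₊ ×ˢ Icc 1 ⌊N⌋₊ | p.1 * p.2 = m} := by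
  refine card_le_card_of_injOn (fun a => (a, m / a)) (fun a ha => ?_)
    fun a _ b _ hab => congrArg Prod.fst hab
  obtain ⟨⟨hdvd, hm⟩, haM, hbN⟩ := by simpa only [coe_filter, Nat.mem_divisors] using ha
  have ha0 : 0 < a := Nat.pos_of_dvd_of_pos hdvd (Nat.pos_of_ne_zero hm)
  simp only [coe_filter, Set.mem_ofPred_eq, mem_product, mem_Icc]
  exact ⟨⟨⟨ha0, Nat.le_floor haM⟩, Nat.div_pos (Nat.le_of_dvd (Nat.pos_of_ne_zero hm) hdvd) ha0,
    Nat.le_floor hbN⟩, Nat.mul_div_cancel' hdvd⟩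

theorem sum_tauMN_le_card_filter_mul_mem (M N : ℝ) (s : Finset ℕ) :
    ∑ m ∈ s, tauMN M N m ≤ #{p ∈ Icc 1 ⌊M⌋₊ ×ˢ Icc 1 ⌊N⌋₊ | p.1 * p.2 ∈ s} := by
  calc ∑ m ∈ s, tauMN M N m
      ≤ ∑ m ∈ s, #{p ∈ {p ∈ Icc 1 ⌊M⌋₊ ×ˢ Icc 1 ⌊N⌋₊ | p.1 * p.2 ∈ s} | p.1 * p.2 = m} := by
        refine sum_le_sum fun m hm => (tauMN_le_card_filter_mul_eq M N m).trans (card_le_card ?_)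
        intro p hp
        simp only [mem_filter] at hp ⊢
        exact ⟨⟨hp.1, hp.2 ▸ hm⟩, hp.2⟩
    _ = _ := (card_eq_sum_card_fiberwise fun p hp => (mem_filter.mp hp).2).symm

theorem Nat.cast_div_add_one_le_two_mul_div {α : Type*} [Semifield α] [LinearOrder α]
    [IsStrictOrderedRing α] {q M : ℕ} (hq : 0 < q) (hqM : q ≤ M) :
    ((M / q + 1 : ℕ) : α) ≤ 2 * M / q := by
  have hone : 1 ≤ M / q := (Nat.one_le_div_iff hq).mpr hqM
  calc ((M / q + 1 : ℕ) : α) ≤ 2 * ((M / q : ℕ) : α) := by exact_mod_cast by omega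
    _ ≤ 2 * (M / q) := by gcongr; exact Nat.cast_div_le
    _ = 2 * M / q := by ring

theorem tau_star_bound_small_q_general (δ : ℝ) (hδ₀ : 0 < δ) :
    ∃ C : ℝ, ∀ N : ℝ, 1 ≤ N → ∀ q : ℕ, 0 < q → (q : ℝ) ≤ N ^ (1 - δ) →
      ∀ r : ℤ, Int.gcd r q = 1 →
      (∑ m ∈ (Finset.Icc 1 ⌊N * N⌋₊).filter
          (fun m : ℕ => (m : ZMod q) = (r : ZMod q)), (tauMN N N m : ℝ)) ≤
        C * N ^ 2 * (q.totient : ℝ) / (q : ℝ) ^ 2 := by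
  refine ⟨4, fun N hN q hq hqN r hr => ?_⟩
  have hqN_le : (q : ℝ) ≤ N :=
    hqN.trans (by simpa using Real.rpow_le_rpow_of_exponent_le hN (by linarith : 1 - δ ≤ 1))
  have hqM : q ≤ ⌊N⌋₊ := Nat.le_floor hqN_le
  have hr' : IsUnit (r : ZMod q) := (ZMod.coe_int_isUnit_iff_isCoprime r q).mpr
    (Int.isCoprime_iff_gcd_eq_one.mpr (by rwa [Int.gcd_comm]))
  have hcount : ∑ m ∈ (Icc 1 ⌊N * N⌋₊).filter (fun m : ℕ => (m : ZMod q) = (r : ZMod q)),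
      tauMN N N m ≤ (⌊N⌋₊ / q + 1) * φ q * (⌊N⌋₊ / q + 1) :=
    (sum_tauMN_le_card_filter_mul_mem N N _).trans <|
      (card_le_card fun p => by
        simp only [mem_filter]; exact And.imp_right And.right).trans
        (card_filter_mul_eq_unit_le hq hr' _ _)
  have hblock : ((⌊N⌋₊ / q + 1 : ℕ) : ℝ) ≤ 2 * N / q :=
    (Nat.cast_div_add_one_le_two_mul_div hq hqM).trans (by gcongr; exact Nat.floor_le (by linarith))
  calc _ ≤ (((⌊N⌋₊ / q + 1) * φ q * (⌊N⌋₊ / q + 1) : ℕ) : ℝ) := by exact_mod_cast hcount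
    _ ≤ (2 * N / q) * φ q * (2 * N / q) := by push_cast at hblock ⊢; gcongr
    _ = 4 * N ^ 2 * φ q / q ^ 2 := by field_simp; ring

/-- Let δ ∈ (0,1).  There is a constant C (depending only on δ) such that for all N ≥ 1,
all q ≤ N^{1−δ} and all r with gcd(r,q) = 1,
∑_{m ≡ r (q)} τ_N^*(m) ≤ C·N²φ(q)/q². -/
theorem tau_star_bound_small_q (δ : ℝ) (hδ₀ : 0 < δ) (hδ₁ : δ < 1) :
    ∃ C : ℝ, ∀ N : ℝ, 1 ≤ N → ∀ q : ℕ, 0 < q → (q : ℝ) ≤ N ^ (1 - δ) →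
      ∀ r : ℤ, Int.gcd r q = 1 →
      (∑ m ∈ (Finset.Icc 1 ⌊N * N⌋₊).filter
          (fun m : ℕ => (m : ZMod q) = (r : ZMod q)), (tauMN N N m : ℝ)) ≤
        C * N ^ 2 * (q.totient : ℝ) / (q : ℝ) ^ 2 :=
  tau_star_bound_small_q_general δ hδ₀
end
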